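/- Let q ≥ 3 and β_c(q) := (q−1)·log(q−1)/(q−2). (1) β_c(q) < q/2, so for 0 < β ≤ β_c(q) one has 2β/q < 1. (2) Suppose β ≥ β_c(q); let s be the largest real solution of s = (1 − e^{−2βs})/(1 + (q−1)·e^{−2βs}) and set s* := (1 + (q−1)s)/q, a := 2βq·s*(1−s*)/(q−1), a' := 2β(1−s*)/(q−1), b := 2β·((1−s*)/(q−1))·(s* − (1−s*)/(q−1)), and λ := (1/2)(a + a' + √((a−a')² + (q−1)b²)). Then 0 < b < a' < a < λ < 1. -/

import Mathlib

noncomputable section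

open Finset

/-- The critical inverse temperature `β_c(q) = (q-1)·log(q-1)/(q-2)`. -/
def betaC (q : ℕ) : ℝ := ((q : ℝ) - 1) * Real.log ((q : ℝ) - 1) / ((q : ℝ) - 2)

/-- `s* = (1 + (q-1)s)/q`. -/
def sStar (q : ℕ) (s : ℝ) : ℝ := (1 + ((q : ℝ) - 1) * s) / q

/-- The constant `a = 2βq·s*(1-s*)/(q-1)`. -/
def aC (q : ℕ) (β s : ℝ) : ℝ := 2 * β * q * s * (1 - s) / ((q : ℝ) - 1)

/-- The constant `a' = 2β(1-s*)/(q-1)`. -/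
def aC' (q : ℕ) (β s : ℝ) : ℝ := 2 * β * (1 - s) / ((q : ℝ) - 1)

/-- The constant `b = 2β·((1-s*)/(q-1))·(s* - (1-s*)/(q-1))`. -/
def bC (q : ℕ) (β s : ℝ) : ℝ :=
  2 * β * ((1 - s) / ((q : ℝ) - 1)) * (s - (1 - s) / ((q : ℝ) - 1))

/-- `λ = (a + a' + √((a-a')² + (q-1)b²))/2`. -/
def lam1 (q : ℕ) (β s : ℝ) : ℝ :=
  (aC q β s + aC' q β s +
    Real.sqrt ((aC q β s - aC' q β s) ^ 2 + ((q : ℝ) - 1) * (bC q β s) ^ 2)) / 2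

/-! With `p = q - 1` and `u = e^{-2βs}`, the fixed-point equation reads `u (1 + p s) = 1 - s`.
At `s*` the constants become `a' = P`, `b = P s`, `a = P (1 + p s)` with `P = 2β(1 - s)/q`, so
`a - a' = p b` and `λ = P (2 + (p + √(q p)) s) / 2`. Since `p < √(q p) < q - 1/2`, the chain
`0 < b < a' < a < λ` is immediate and `λ < 1` reduces to `β (1 - s) (2 + (2q - 3/2) s) ≤ q`.

For `β ≥ β_c` the intermediate value theorem gives a fixed point `≥ (p - 1)/p`, so the largest one
satisfies `u p² ≤ 1`. In terms of `u` the required bound is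
`-log u · u (2p + 5/2 - u/2) ≤ 2 (1 - u)(1 + p u)`; it follows from the tangent-line bound
`-log u ≤ 2 log p - 1 + 1/(u p²)` and `log p < 7/10 + (p - 2)/2`, which also gives `β_c < q/2`. -/

open Real

lemma log_lt_seven_tenths_add {p : ℝ} (hp : 0 < p) : log p < 7 / 10 + (p - 2) / 2 := by
  have h := log_le_sub_one_of_pos (half_pos hp)
  rw [log_div hp.ne' two_ne_zero] at h
  linarith [log_two_lt_d9]

lemma betaC_lt_half {q : ℕ} (hq : 3 ≤ q) : betaC q < q / 2 := by
  have hq' : (3 : ℝ) ≤ q := by exact_mod_cast hq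
  have h := log_lt_seven_tenths_add (p := (q : ℝ) - 1) (by linarith)
  rw [betaC, div_lt_iff₀ (by linarith)]
  nlinarith

lemma betaC_pos {q : ℕ} (hq : 3 ≤ q) : 0 < betaC q := by
  have hq' : (3 : ℝ) ≤ q := by exact_mod_cast hq
  exact div_pos (mul_pos (by linarith) (log_pos (by linarith))) (by linarith)

lemma log_le_mul_of_betaC_le {q : ℕ} {β : ℝ} (hq : 3 ≤ q) (hβ : betaC q ≤ β) :
    log ((q : ℝ) - 1) ≤ β * (((q : ℝ) - 1 - 1) / ((q : ℝ) - 1)) := by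
  have hq' : (3 : ℝ) ≤ q := by exact_mod_cast hq
  have h : betaC q * (((q : ℝ) - 1 - 1) / ((q : ℝ) - 1)) = log ((q : ℝ) - 1) := by
    rw [betaC]
    field_simp [show (q : ℝ) - 2 ≠ 0 by linarith, show (q : ℝ) - 1 ≠ 0 by linarith]
    ring
  rw [← h]
  exact mul_le_mul_of_nonneg_right hβ (div_nonneg (by linarith) (by linarith))

-- The difference of the two sides is concave in `u`, so it suffices to check it at `u = 0` and
-- at `u = p⁻²`.
lemma affine_log_bound_le {p u k : ℝ} (hp : 2 ≤ p) (hu : 0 ≤ u) (hup : u * p ^ 2 ≤ 1)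
    (hk : k ≤ p - 8 / 5) :
    (k * (u * p ^ 2) + 1) * (2 * p + 5 / 2 - u / 2) ≤ 2 * p ^ 2 * (1 - u) * (1 + p * u) := by
  have hR : 0 ≤ u * p ^ 2 * (2 * p + 5 / 2 - u / 2) := mul_nonneg (by positivity) (by nlinarith)
  have := mul_le_mul_of_nonneg_right hk hR
  nlinarith [mul_nonneg (sub_nonneg.2 hup) (by nlinarith : (0 : ℝ) ≤ 2 * p ^ 2 - 2 * p - 5 / 2),
    mul_nonneg hu (by nlinarith : (0 : ℝ) ≤
      7 / 10 * (p - 2) ^ 3 + 37 / 10 * (p - 2) ^ 2 + 49 / 10 * (p - 2) + 3 / 10),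
    mul_nonneg (mul_nonneg hu (sub_nonneg.2 hup)) (by linarith : (0 : ℝ) ≤ p - 2)]

lemma neg_log_mul_le {p u : ℝ} (hp : 2 ≤ p) (hu : 0 < u) (hup : u * p ^ 2 ≤ 1) :
    -log u * u * (2 * p + 5 / 2 - u / 2) ≤ 2 * (1 - u) * (1 + p * u) := by
  have hlog : -log u * (u * p ^ 2) ≤ (2 * log p - 1) * (u * p ^ 2) + 1 := by
    have h := one_sub_inv_le_log_of_pos (x := u * p ^ 2) (by positivity)
    rw [log_mul hu.ne' (by positivity), log_pow] at h
    have := mul_le_mul_of_nonneg_right h (by positivity : 0 ≤ u * p ^ 2)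
    rw [sub_mul, inv_mul_cancel₀ (by positivity)] at this
    push_cast at this
    linarith
  have hk : 2 * log p - 1 ≤ p - 8 / 5 := by
    linarith [log_lt_seven_tenths_add (p := p) (by linarith)]
  refine le_of_mul_le_mul_left ?_ (by positivity : 0 < p ^ 2)
  calc p ^ 2 * (-log u * u * (2 * p + 5 / 2 - u / 2))
      = -log u * (u * p ^ 2) * (2 * p + 5 / 2 - u / 2) := by ring
    _ ≤ ((2 * log p - 1) * (u * p ^ 2) + 1) * (2 * p + 5 / 2 - u / 2) :=
      mul_le_mul_of_nonneg_right hlog (by nlinarith)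
    _ ≤ 2 * p ^ 2 * (1 - u) * (1 + p * u) := affine_log_bound_le hp hu.le hup hk
    _ = p ^ 2 * (2 * (1 - u) * (1 + p * u)) := by ring

def pottsMap (p β t : ℝ) : ℝ := (1 - exp (-2 * β * t)) / (1 + p * exp (-2 * β * t))

lemma eq_pottsMap_iff {p β t : ℝ} (hp : 0 ≤ p) :
    t = pottsMap p β t ↔ exp (-2 * β * t) * (1 + p * t) = 1 - t := by
  have hD : 0 < 1 + p * exp (-2 * β * t) := by positivity
  rw [pottsMap, eq_div_iff hD.ne']
  constructor <;> intro h <;> linarith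

lemma exists_eq_pottsMap_ge {p β : ℝ} (hp : 1 < p) (hβ : log p ≤ β * ((p - 1) / p)) :
    ∃ t, (p - 1) / p ≤ t ∧ t = pottsMap p β t := by
  set t₀ := (p - 1) / p
  set f : ℝ → ℝ := fun t ↦ 1 - t - exp (-2 * β * t) * (1 + p * t)
  have ht₀ : t₀ ≤ 1 := (div_le_one (by linarith)).2 (by linarith)
  have hf₁ : f 1 ≤ 0 := by
    have := exp_pos (-2 * β * 1)
    simp only [f]; nlinarith
  have hf₀ : 0 ≤ f t₀ := by
    have hexp : exp (-2 * β * t₀) * p ^ 2 ≤ 1 := by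
      have h : exp (-2 * β * t₀) ≤ (p ^ 2)⁻¹ := by
        rw [← exp_log (by positivity : 0 < (p ^ 2)⁻¹), log_inv, log_pow]
        push_cast
        exact exp_le_exp.2 (by linarith)
      calc exp (-2 * β * t₀) * p ^ 2 ≤ (p ^ 2)⁻¹ * p ^ 2 := by gcongr
        _ = 1 := inv_mul_cancel₀ (by positivity)
    have hpt₀ : 1 + p * t₀ = p := by simp only [t₀]; field_simp; ring
    simp only [f]
    rw [hpt₀]
    have : 1 - t₀ = 1 / p := by simp only [t₀]; field_simp; ring
    rw [this, le_sub_iff_add_le, zero_add, le_div_iff₀ (by linarith)]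
    nlinarith
  obtain ⟨t, ht, hft⟩ := intermediate_value_Icc' ht₀ (by fun_prop) ⟨hf₁, hf₀⟩
  exact ⟨t, ht.1, (eq_pottsMap_iff (by linarith)).2 (by simp only [f] at hft; linarith)⟩

lemma lt_one_of_eq_pottsMap {p β t : ℝ} (hp : 0 ≤ p) (ht : 0 < t) (hfix : t = pottsMap p β t) :
    t < 1 := by
  have h := (eq_pottsMap_iff hp).1 hfix
  have : 0 < exp (-2 * β * t) * (1 + p * t) := by positivity
  linarith

lemma mul_le_of_eq_pottsMap {p β s : ℝ} (hp : 2 ≤ p) (hs : (p - 1) / p ≤ s)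
    (hfix : s = pottsMap p β s) : β * (1 - s) * (2 + (2 * p + 1 / 2) * s) ≤ p + 1 := by
  set u := exp (-2 * β * s)
  set D := 1 + p * u
  have hu : 0 < u := exp_pos _
  have hfix' : u * (1 + p * s) = 1 - s := (eq_pottsMap_iff (by linarith)).1 hfix
  have hps : p - 1 ≤ p * s := by rwa [div_le_iff₀ (by linarith), mul_comm] at hs
  have hs₀ : 0 < s := lt_of_lt_of_le (div_pos (by linarith) (by linarith)) hs
  have hup : u * p ^ 2 ≤ 1 := by nlinarith
  have hsD : s * D = 1 - u := by simp only [D]; linear_combination hfix'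
  have hs1D : (1 - s) * D = (p + 1) * u := by simp only [D]; linear_combination -hfix'
  have hRD : (2 + (2 * p + 1 / 2) * s) * D = 2 * p + 5 / 2 - u / 2 := by
    simp only [D] at hsD ⊢; linear_combination (2 * p + 1 / 2) * hsD
  have hlog : 2 * β * s = -log u := by simp only [u, log_exp]; ring
  refine le_of_mul_le_mul_right ?_ (by positivity : 0 < 2 * s * D ^ 2)
  calc β * (1 - s) * (2 + (2 * p + 1 / 2) * s) * (2 * s * D ^ 2)
      = 2 * β * s * ((1 - s) * D) * ((2 + (2 * p + 1 / 2) * s) * D) := by ring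
    _ = (p + 1) * (-log u * u * (2 * p + 5 / 2 - u / 2)) := by rw [hlog, hs1D, hRD]; ring
    _ ≤ (p + 1) * (2 * (1 - u) * D) :=
      mul_le_mul_of_nonneg_left (neg_log_mul_le hp hu hup) (by linarith)
    _ = (p + 1) * (2 * s * D ^ 2) := by rw [← hsD]; ring

lemma sqrt_mul_sub_one_lt {x : ℝ} (hx : 1 ≤ x) : √(x * (x - 1)) < x - 1 / 2 := by
  rw [sqrt_lt' (by linarith)]
  nlinarith

lemma sub_one_lt_sqrt_mul {x : ℝ} (hx : 1 < x) : x - 1 < √(x * (x - 1)) := by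
  rw [lt_sqrt (by linarith)]
  nlinarith

section sStar

variable {q : ℕ} {β s : ℝ}

lemma aC'_sStar (hq : 1 < q) : aC' q β (sStar q s) = 2 * β * (1 - s) / q := by
  have hq' : (1 : ℝ) < q := by exact_mod_cast hq
  rw [aC', sStar]
  field_simp [show (q : ℝ) - 1 ≠ 0 by linarith]
  ring

lemma bC_sStar (hq : 1 < q) : bC q β (sStar q s) = 2 * β * (1 - s) / q * s := by
  have hq' : (1 : ℝ) < q := by exact_mod_cast hq
  rw [bC, sStar]
  field_simp [show (q : ℝ) - 1 ≠ 0 by linarith]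
  ring

lemma aC_sStar (hq : 1 < q) :
    aC q β (sStar q s) = 2 * β * (1 - s) / q * (1 + ((q : ℝ) - 1) * s) := by
  have hq' : (1 : ℝ) < q := by exact_mod_cast hq
  rw [aC, sStar]
  field_simp [show (q : ℝ) - 1 ≠ 0 by linarith]
  ring

lemma lam1_sStar (hq : 1 < q) (hb : 0 ≤ 2 * β * (1 - s) / q * s) :
    lam1 q β (sStar q s) =
      2 * β * (1 - s) / q * (2 + ((q : ℝ) - 1 + √((q : ℝ) * (q - 1))) * s) / 2 := by
  rw [lam1, aC_sStar hq, aC'_sStar hq, bC_sStar hq]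
  have : (2 * β * (1 - s) / q * (1 + ((q : ℝ) - 1) * s) - 2 * β * (1 - s) / q) ^ 2 +
      ((q : ℝ) - 1) * (2 * β * (1 - s) / q * s) ^ 2 =
      (q * (q - 1)) * (2 * β * (1 - s) / q * s) ^ 2 := by ring
  rw [this, sqrt_mul' _ (sq_nonneg _), sqrt_sq hb]
  ring

lemma sStar_constants_ordered (hq : 1 < q) (hβ : 0 < β) (hs₀ : 0 < s) (hs₁ : s < 1) :
    0 < bC q β (sStar q s) ∧ bC q β (sStar q s) < aC' q β (sStar q s) ∧
      aC' q β (sStar q s) < aC q β (sStar q s) ∧ aC q β (sStar q s) < lam1 q β (sStar q s) := by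
  have hq' : (1 : ℝ) < q := by exact_mod_cast hq
  have hP : 0 < 2 * β * (1 - s) / q := div_pos (by nlinarith) (by linarith)
  have hroot := sub_one_lt_sqrt_mul hq'
  rw [lam1_sStar hq (by positivity), aC_sStar hq, aC'_sStar hq, bC_sStar hq]
  refine ⟨by positivity, mul_lt_of_lt_one_right hP hs₁,
    lt_mul_of_one_lt_right hP (by nlinarith), ?_⟩
  nlinarith [mul_lt_mul_of_pos_left hroot (mul_pos hP hs₀)]

lemma lam1_sStar_lt_one (hq : 1 < q) (hβ : 0 < β) (hs₀ : 0 < s) (hs₁ : s < 1)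
    (h : β * (1 - s) * (2 + (2 * q - 3 / 2) * s) ≤ q) : lam1 q β (sStar q s) < 1 := by
  have hq' : (1 : ℝ) < q := by exact_mod_cast hq
  have hP : 0 < 2 * β * (1 - s) / q := div_pos (by nlinarith) (by linarith)
  have hroot := sqrt_mul_sub_one_lt hq'.le
  rw [lam1_sStar hq (by positivity)]
  calc 2 * β * (1 - s) / q * (2 + ((q : ℝ) - 1 + √((q : ℝ) * (q - 1))) * s) / 2
      < 2 * β * (1 - s) / q * (2 + (2 * q - 3 / 2) * s) / 2 := by gcongr; linarith
    _ = β * (1 - s) * (2 + (2 * q - 3 / 2) * s) / q := by field_simp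
    _ ≤ 1 := (div_le_one (by linarith)).2 h

end sStar

theorem stmt14 (q : ℕ) (hq : 3 ≤ q) (β : ℝ) (hβ : betaC q ≤ β) (s : ℝ)
    (hsol : s = (1 - Real.exp (-2 * β * s)) /
      (1 + ((q : ℝ) - 1) * Real.exp (-2 * β * s)))
    (hmax : ∀ t : ℝ, t = (1 - Real.exp (-2 * β * t)) /
      (1 + ((q : ℝ) - 1) * Real.exp (-2 * β * t)) → t ≤ s) :
    (betaC q < (q : ℝ) / 2 ∧ ∀ β' : ℝ, 0 < β' → β' ≤ betaC q → 2 * β' / q < 1) ∧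
    (0 < bC q β (sStar q s) ∧ bC q β (sStar q s) < aC' q β (sStar q s) ∧
      aC' q β (sStar q s) < aC q β (sStar q s) ∧
      aC q β (sStar q s) < lam1 q β (sStar q s) ∧ lam1 q β (sStar q s) < 1) := by
  have hq' : (3 : ℝ) ≤ q := by exact_mod_cast hq
  have hβ₀ : 0 < β := (betaC_pos hq).trans_le hβ
  have hfix : s = pottsMap ((q : ℝ) - 1) β s := hsol
  obtain ⟨t, ht, htfix⟩ :=
    exists_eq_pottsMap_ge (p := (q : ℝ) - 1) (by linarith) (log_le_mul_of_betaC_le hq hβ)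
  have hs : ((q : ℝ) - 1 - 1) / ((q : ℝ) - 1) ≤ s := ht.trans (hmax t htfix)
  have hs₀ : 0 < s := (div_pos (by linarith) (by linarith)).trans_le hs
  have hs₁ : s < 1 := lt_one_of_eq_pottsMap (by linarith) hs₀ hfix
  have hbound := mul_le_of_eq_pottsMap (by linarith) hs hfix
  have hq₁ : 1 < q := by omega
  obtain ⟨hb, hba', ha'a, ha_lam⟩ := sStar_constants_ordered hq₁ hβ₀ hs₀ hs₁
  refine ⟨⟨betaC_lt_half hq, fun β' _ hβ' ↦ (div_lt_one (by positivity)).2 ?_⟩,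
    hb, hba', ha'a, ha_lam, lam1_sStar_lt_one hq₁ hβ₀ hs₀ hs₁ (by linear_combination hbound)⟩
  linarith [betaC_lt_half hq]
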